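/- arXiv:2101.03797 — 6 statements merged into one kernel-verified Lean document; each statement's English description precedes it below -/
import Mathlib

section
/- A positive integer h divides 24 if and only if for all integers x and y with x*y ≡ 1 (mod h), we have x ≡ y (mod h). -/
private lemma aux_units_sq (h : ℕ) (hpos : 0 < h)
    (H : ∀ x y : ℤ, x * y ≡ 1 [ZMOD (h : ℤ)] → x ≡ y [ZMOD (h : ℤ)]) :
    ∀ u : (ZMod h)ˣ, u ^ 2 = 1 := by
  haveI : NeZero h := ⟨hpos.ne'⟩
  intro u
  set x : ℤ := ((u : ZMod h).val : ℤ) with hx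
  set y : ℤ := (((u⁻¹ : (ZMod h)ˣ) : ZMod h).val : ℤ) with hy
  have hcx : ((x : ℤ) : ZMod h) = (u : ZMod h) := by
    simp [hx, ZMod.natCast_val, ZMod.cast_id]
  have hcy : ((y : ℤ) : ZMod h) = ((u⁻¹ : (ZMod h)ˣ) : ZMod h) := by
    simp [hy, ZMod.natCast_val, ZMod.cast_id]
  have hmul : x * y ≡ 1 [ZMOD (h : ℤ)] := by
    rw [← ZMod.intCast_eq_intCast_iff]
    push_cast
    rw [hcx, hcy]
    simp
  have := H x y hmul
  rw [← ZMod.intCast_eq_intCast_iff, hcx, hcy] at this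
  have huu : u = u⁻¹ := Units.ext this
  calc u ^ 2 = u * u := sq u
  _ = u * u⁻¹ := by rw [← huu]
  _ = 1 := mul_inv_cancel u

/-- The "curious fact" of Conway and Norton: a positive integer `h` divides `24`
if and only if every pair of integers that are multiplicative inverses modulo `h`
are congruent modulo `h`. -/
theorem divides_24_iff_inverse_congruent (h : ℕ) (hpos : 0 < h) :
    h ∣ 24 ↔ ∀ x y : ℤ, x * y ≡ 1 [ZMOD (h : ℤ)] → x ≡ y [ZMOD (h : ℤ)] := by
  constructor
  · intro hd
    have key : ∀ x y : ZMod h, x * y = 1 → x = y := by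
      have h24 : h ≤ 24 := Nat.le_of_dvd (by norm_num) hd
      interval_cases h <;> revert hd <;> decide
    intro x y hxy
    rw [← ZMod.intCast_eq_intCast_iff] at hxy ⊢
    push_cast at hxy
    exact key _ _ hxy
  · intro H
    haveI : NeZero h := ⟨hpos.ne'⟩
    have key : ∀ u : (ZMod h)ˣ, u ^ 2 = 1 := aux_units_sq h hpos H
    have key2 : ∀ d : ℕ, d ∣ h → ∀ v : (ZMod d)ˣ, v ^ 2 = 1 := by
      intro d hd v
      obtain ⟨u, rfl⟩ := ZMod.unitsMap_surjective hd v
      rw [← map_pow, key u, map_one]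
    -- rule out bad prime powers
    have h16 : ¬ (16 ∣ h) := by
      intro hdvd
      have := key2 16 hdvd (ZMod.unitOfCoprime 3 (by decide))
      revert this; decide
    have h9 : ¬ (9 ∣ h) := by
      intro hdvd
      have := key2 9 hdvd (ZMod.unitOfCoprime 2 (by decide))
      revert this; decide
    have hp : ∀ p : ℕ, p.Prime → p ∣ h → p ≤ 3 := by
      intro p pp hdvd
      by_contra hgt
      push_neg at hgt
      have hodd : p ≠ 2 := by omega
      have hco : Nat.Coprime 2 p := (Nat.coprime_primes Nat.prime_two pp).2 (Ne.symm hodd)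
      have := key2 p hdvd (ZMod.unitOfCoprime 2 hco)
      have hval : ((2 : ℕ) : ZMod p) * ((2 : ℕ) : ZMod p) = 1 := by
        have h' := congrArg (Units.val) this
        rw [pow_two] at h'
        simpa [ZMod.coe_unitOfCoprime] using h'
      have h4 : ((4 : ℕ) : ZMod p) = ((1 : ℕ) : ZMod p) := by
        push_cast at hval ⊢
        rw [show (4 : ZMod p) = 2 * 2 by norm_num]
        exact hval
      rw [ZMod.natCast_eq_natCast_iff] at h4
      have : p ∣ 3 := by
        have := (Nat.modEq_iff_dvd' (by norm_num)).1 h4.symm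
        simpa using this
      have := Nat.le_of_dvd (by norm_num) this
      omega
    rw [Nat.dvd_iff_prime_pow_dvd_dvd]
    intro p k pp hpk
    rcases Nat.eq_zero_or_pos k with rfl | hk
    · simp
    have ppn : p.Prime := pp
    have hpdvd : p ∣ h := dvd_trans (dvd_trans (dvd_pow_self p hk.ne') hpk) dvd_rfl
    have hple := hp p ppn hpdvd
    have hp2 := ppn.two_le
    interval_cases p
    · -- p = 2
      have hk3 : k ≤ 3 := by
        by_contra hk4
        push_neg at hk4
        exact h16 (dvd_trans (pow_dvd_pow 2 hk4) hpk)
      calc (2:ℕ) ^ k ∣ 2 ^ 3 := pow_dvd_pow 2 hk3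
      _ ∣ 24 := by norm_num
    · -- p = 3
      have hk1 : k ≤ 1 := by
        by_contra hk2
        push_neg at hk2
        exact h9 (dvd_trans (pow_dvd_pow 3 hk2) hpk)
      calc (3:ℕ) ^ k ∣ 3 ^ 1 := pow_dvd_pow 3 hk1
      _ ∣ 24 := by norm_num
end

section
/- Let h be a positive integer dividing 24. Then the matrix T_h = [[1, 1/h], [0, 1]] normalises Γ₀(h²) inside GL₂(ℚ), i.e., for every matrix γ ∈ Γ₀(h²) we have T_h · γ · T_h⁻¹ ∈ Γ₀(h²). -/
/-!
Conjugating `[[a, b], [c, d]]` by `[[1, t], [0, 1]]` gives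
`[[a + t c, b + t (d - a) - t² c], [c, d - t c]]`. With `t = 1/h` and `h² ∣ c`, this is integral
exactly when `h ∣ d - a`. Since `ad ≡ 1 (mod h)`, that amounts to `a⁻¹ = a` in `(ℤ/h)ˣ`, which holds
because the Carmichael function satisfies `λ(24) = 2` and `λ(h) ∣ λ(24)`.
-/

open ArithmeticFunction

lemma carmichael_twentyFour : carmichael 24 = 2 := by
  have h8 : carmichael (2 ^ 3) = 2 := by rw [carmichael_two_pow_of_ne_two (by norm_num)]; rfl
  have h3 : carmichael (3 ^ 1) = 2 := by
    rw [carmichael_pow_of_prime_ne_two 1 Nat.prime_three (by norm_num)]; decide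
  rw [show 24 = 2 ^ 3 * 3 ^ 1 by norm_num, carmichael_mul (by norm_num), h8, h3]; rfl

theorem ZMod.units_sq_eq_one_of_dvd_twentyFour {n : ℕ} (hn : n ∣ 24) (u : (ZMod n)ˣ) :
    u ^ 2 = 1 := by
  obtain ⟨k, hk⟩ := carmichael_twentyFour ▸ carmichael_dvd hn
  rw [hk, pow_mul, pow_carmichael, one_pow]

theorem ZMod.eq_of_mul_eq_one_of_dvd_twentyFour {n : ℕ} (hn : n ∣ 24) {x y : ZMod n}
    (hxy : x * y = 1) : x = y := by
  have hsq :=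
    congrArg Units.val (units_sq_eq_one_of_dvd_twentyFour hn (Units.mkOfMulEqOne x y hxy))
  rw [Units.val_pow_eq_pow_val, Units.val_mkOfMulEqOne, Units.val_one, sq] at hsq
  calc x = x * (x * y) := by rw [hxy, mul_one]
    _ = y := by rw [← mul_assoc, hsq, one_mul]

theorem Int.dvd_sub_of_dvd_mul_sub_one_of_dvd_twentyFour {n : ℕ} (hn : n ∣ 24) {a d : ℤ}
    (had : (n : ℤ) ∣ a * d - 1) : (n : ℤ) ∣ d - a := by
  rw [← ZMod.intCast_zmod_eq_zero_iff_dvd] at had ⊢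
  push_cast at had ⊢
  rw [ZMod.eq_of_mul_eq_one_of_dvd_twentyFour hn (sub_eq_zero.mp had), sub_self]

theorem Matrix.conj_unipotent_fin_two {R : Type*} [CommRing R] (t a b c d : R) :
    !![1, t; 0, 1] * !![a, b; c, d] * !![1, -t; 0, 1]
      = !![a + t * c, b + t * (d - a) - t ^ 2 * c; c, d - t * c] := by
  ext i j; fin_cases i <;> fin_cases j <;> simp [Matrix.mul_apply, Fin.sum_univ_two] <;> ring

theorem Matrix.inv_unipotent_fin_two {R : Type*} [CommRing R] (t : R) :
    (!![1, t; 0, 1])⁻¹ = !![1, -t; 0, 1] :=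
  Matrix.inv_eq_right_inv (by simp [Matrix.one_fin_two])

theorem Th_normalises_Gamma0_sq_general (h : ℕ) (hdvd : h ∣ 24)
    (γ : Matrix (Fin 2) (Fin 2) ℤ) (hdet : γ.det = 1) (hc : ((h : ℤ)) ^ 2 ∣ γ 1 0) :
    ∃ δ : Matrix (Fin 2) (Fin 2) ℤ, δ.det = 1 ∧ ((h : ℤ)) ^ 2 ∣ δ 1 0 ∧
      (!![1, 1 / (h : ℚ); 0, 1]) * γ.map (Int.cast : ℤ → ℚ) * (!![1, 1 / (h : ℚ); 0, 1])⁻¹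
        = δ.map (Int.cast : ℤ → ℚ) := by
  rw [Matrix.det_fin_two] at hdet
  obtain ⟨c, hc⟩ := hc
  obtain ⟨k, hk⟩ : (h : ℤ) ∣ γ 1 1 - γ 0 0 :=
    Int.dvd_sub_of_dvd_mul_sub_one_of_dvd_twentyFour hdvd
      ⟨h * c * γ 0 1, by linear_combination hdet + γ 0 1 * hc⟩
  refine ⟨!![γ 0 0 + h * c, γ 0 1 + k - c; γ 1 0, γ 1 1 - h * c], ?_, ⟨c, hc⟩, ?_⟩
  · rw [Matrix.det_fin_two_of]
    linear_combination hdet + (h : ℤ) * c * hk + (c - k) * hc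
  · have hh : (h : ℚ) ≠ 0 := by exact_mod_cast ne_zero_of_dvd_ne_zero (by norm_num) hdvd
    have hkq : (γ 1 1 : ℚ) - γ 0 0 = h * k := by exact_mod_cast hk
    have hcq : (γ 1 0 : ℚ) = h ^ 2 * c := by exact_mod_cast hc
    rw [Matrix.eta_fin_two (γ.map _), Matrix.inv_unipotent_fin_two, Matrix.conj_unipotent_fin_two]
    ext i j
    fin_cases i <;> fin_cases j <;> simp [hkq, hcq] <;> field_simp

/-- If `h ∣ 24` then `T_h = [[1, 1/h], [0, 1]]` normalises `Γ₀(h²)`: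
for every integer matrix `γ` of determinant 1 whose lower-left entry is divisible
by `h²`, the matrix `T_h · γ · T_h⁻¹` is again such a matrix. -/
theorem Th_normalises_Gamma0_sq (h : ℕ) (hpos : 0 < h) (hdvd : h ∣ 24)
    (γ : Matrix (Fin 2) (Fin 2) ℤ) (hdet : γ.det = 1) (hc : ((h : ℤ)) ^ 2 ∣ γ 1 0) :
    ∃ δ : Matrix (Fin 2) (Fin 2) ℤ, δ.det = 1 ∧ ((h : ℤ)) ^ 2 ∣ δ 1 0 ∧
      (!![1, 1 / (h : ℚ); 0, 1]) * γ.map (Int.cast : ℤ → ℚ) * (!![1, 1 / (h : ℚ); 0, 1])⁻¹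
        = δ.map (Int.cast : ℤ → ℚ) :=
  Th_normalises_Gamma0_sq_general h hdvd γ hdet hc
end

section
/- Conversely, if h is a positive integer such that the matrix T_h = [[1, 1/h], [0, 1]] normalises Γ₀(h²), then h divides 24. -/
/-!
Write `T = T_h`. For `γ = [[a, b], [c, d]]` with `h² ∣ c`, the upper-right entry of `T γ T⁻¹` is
`b + (d - a) / h - c / h²`, so integrality of the conjugate forces `d ≡ a (mod h)`. Given any `a`
prime to `h`, completing `(a, h²)` to a matrix of `Γ₀(h²)` with `a d ≡ 1 (mod h²)` thus yields
`a² ≡ 1 (mod h)`: the Carmichael function satisfies `λ(h) ∣ 2`. Testing this on the units `3`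
modulo `2^k` and `2` modulo odd `p^k`, for the prime powers dividing `h`, gives `h ∣ 24`.
-/

open Matrix ArithmeticFunction

lemma Matrix.conj_upperUnitriangular_apply_zero_one {K : Type*} [Field K] (t : K)
    (M : Matrix (Fin 2) (Fin 2) K) :
    (!![1, t; 0, 1] * M * (!![1, t; 0, 1])⁻¹) 0 1
      = M 0 1 + t * (M 1 1 - M 0 0) - t ^ 2 * M 1 0 := by
  have hinv : (!![1, t; 0, 1])⁻¹ = !![1, -t; 0, 1] :=
    inv_eq_right_inv (by simp [Matrix.one_fin_two])
  rw [hinv, eta_fin_two M]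
  simp only [mul_fin_two, of_apply, cons_val', cons_val_zero, cons_val_one, empty_val',
    cons_val_fin_one]
  ring

lemma dvd_sub_of_conj_eq_map_intCast {h : ℕ} (hh : h ≠ 0) {γ δ : Matrix (Fin 2) (Fin 2) ℤ}
    (hγ : (h : ℤ) ^ 2 ∣ γ 1 0)
    (hconj : !![1, 1 / (h : ℚ); 0, 1] * γ.map (Int.cast : ℤ → ℚ) * (!![1, 1 / (h : ℚ); 0, 1])⁻¹
      = δ.map (Int.cast : ℤ → ℚ)) :
    (h : ℤ) ∣ γ 1 1 - γ 0 0 := by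
  obtain ⟨c, hc⟩ := hγ
  have h01 := congrFun₂ hconj 0 1
  rw [conj_upperUnitriangular_apply_zero_one] at h01
  simp only [map_apply, hc] at h01
  refine ⟨δ 0 1 - γ 0 1 + c, ?_⟩
  have hhQ : (h : ℚ) ≠ 0 := Nat.cast_ne_zero.mpr hh
  push_cast at h01
  field_simp at h01
  have key : ((γ 1 1 - γ 0 0 : ℤ) : ℚ) = ((h * (δ 0 1 - γ 0 1 + c) : ℤ) : ℚ) := by
    push_cast
    linear_combination h01
  exact_mod_cast key

lemma dvd_sq_sub_one_of_Th_normalises {h : ℕ} (hh : h ≠ 0)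
    (hnorm : ∀ γ : Matrix (Fin 2) (Fin 2) ℤ, γ.det = 1 → ((h : ℤ)) ^ 2 ∣ γ 1 0 →
      ∃ δ : Matrix (Fin 2) (Fin 2) ℤ, δ.det = 1 ∧ ((h : ℤ)) ^ 2 ∣ δ 1 0 ∧
        (!![1, 1 / (h : ℚ); 0, 1]) * γ.map (Int.cast : ℤ → ℚ) * (!![1, 1 / (h : ℚ); 0, 1])⁻¹
          = δ.map (Int.cast : ℤ → ℚ))
    {a : ℤ} (ha : IsCoprime a h) : (h : ℤ) ∣ a ^ 2 - 1 := by
  obtain ⟨u, v, huv⟩ := ha.pow_right (n := 2)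
  have hdet : (!![a, -v; (h : ℤ) ^ 2, u]).det = 1 := by
    rw [det_fin_two_of]
    linear_combination huv
  obtain ⟨δ, -, -, hconj⟩ := hnorm _ hdet (by simp)
  have hua : (h : ℤ) ∣ u - a := by
    simpa using dvd_sub_of_conj_eq_map_intCast hh (by simp) hconj
  -- modulo `h`, `a ^ 2 ≡ a * u ≡ 1`
  have : a ^ 2 - 1 = -a * (u - a) - v * h * h := by linear_combination huv
  rw [this]
  exact dvd_sub (dvd_mul_of_dvd_right hua _) (dvd_mul_left _ _)

lemma carmichael_dvd_two_of_forall_dvd_sq_sub_one {n : ℕ} (hn : n ≠ 0)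
    (H : ∀ a : ℤ, IsCoprime a n → (n : ℤ) ∣ a ^ 2 - 1) : carmichael n ∣ 2 := by
  have : NeZero n := ⟨hn⟩
  rw [carmichael_eq_exponent', Monoid.exponent_dvd_iff_forall_pow_eq_one]
  intro u
  have hdvd := H _ (Nat.isCoprime_iff_coprime.mpr (ZMod.val_coe_unit_coprime u))
  rw [← ZMod.intCast_zmod_eq_zero_iff_dvd] at hdvd
  push_cast at hdvd
  rw [ZMod.natCast_zmod_val, sub_eq_zero] at hdvd
  exact Units.ext (by simpa using hdvd)

lemma dvd_sq_sub_one_of_carmichael_dvd_two {n : ℕ} (hn : carmichael n ∣ 2) {a : ℕ}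
    (ha : a.Coprime n) : (n : ℤ) ∣ (a : ℤ) ^ 2 - 1 := by
  obtain ⟨c, hc⟩ := hn
  have hsq : ZMod.unitOfCoprime a ha ^ 2 = 1 := by
    rw [hc, pow_mul, pow_carmichael, one_pow]
  rw [← ZMod.intCast_zmod_eq_zero_iff_dvd]
  push_cast
  rw [sub_eq_zero]
  simpa using congrArg Units.val hsq

lemma dvd_24_of_carmichael_dvd_two {n : ℕ} (hn : carmichael n ∣ 2) : n ∣ 24 := by
  rw [Nat.dvd_iff_prime_pow_dvd_dvd]
  intro p k hp hpk
  have hk := (carmichael_dvd hpk).trans hn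
  rcases eq_or_ne p 2 with rfl | hp2
  · have : ((2 ^ k : ℕ) : ℤ) ∣ 8 := by
      simpa using dvd_sq_sub_one_of_carmichael_dvd_two hk (a := 3)
        (Nat.Coprime.pow_right k (by norm_num))
    exact (Int.natCast_dvd_natCast.mp this).trans (by norm_num)
  · have : ((p ^ k : ℕ) : ℤ) ∣ 3 := by
      simpa using dvd_sq_sub_one_of_carmichael_dvd_two hk (a := 2)
        (((Nat.coprime_primes Nat.prime_two hp).mpr hp2.symm).pow_right k)
    exact (Int.natCast_dvd_natCast.mp this).trans (by norm_num)

/-- Conversely: if `h` is a positive integer such that `T_h = [[1, 1/h], [0, 1]]`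
normalises `Γ₀(h²)` (i.e. conjugation by `T_h` sends every integer matrix of
determinant 1 with lower-left entry divisible by `h²` to another such matrix),
then `h` divides `24`. -/
theorem dvd_24_of_Th_normalises (h : ℕ) (hpos : 0 < h)
    (hnorm : ∀ γ : Matrix (Fin 2) (Fin 2) ℤ, γ.det = 1 → ((h : ℤ)) ^ 2 ∣ γ 1 0 →
      ∃ δ : Matrix (Fin 2) (Fin 2) ℤ, δ.det = 1 ∧ ((h : ℤ)) ^ 2 ∣ δ 1 0 ∧
        (!![1, 1 / (h : ℚ); 0, 1]) * γ.map (Int.cast : ℤ → ℚ) * (!![1, 1 / (h : ℚ); 0, 1])⁻¹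
          = δ.map (Int.cast : ℤ → ℚ)) :
    h ∣ 24 :=
  dvd_24_of_carmichael_dvd_two <| carmichael_dvd_two_of_forall_dvd_sq_sub_one hpos.ne' fun _ ha ↦
    dvd_sq_sub_one_of_Th_normalises hpos.ne' hnorm ha
end

section
/- Let M and K be coprime positive integers with K > 1. Then Γ₀(M) can be generated by the matrix T = [[1,1],[0,1]] together with finitely many matrices of the form [[K·a, b], [M·c, K·d]] with a, b, c, d integers. -/
/-!
Write `γ = [[a, b], [c, d]]` and `L = [[1, 0], [M, 1]]`; `M` is a unit modulo `K`. Since `b` and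
`d` are coprime, `T ^ s * γ` has top-right entry `b + s * d` prime to `K` for a suitable `s`. Right
and left multiplication by powers of `L` add multiples of `M * b` to `a` and to `d` respectively,
leaving `b` fixed, so some `L ^ v * T ^ s * γ * L ^ u` has both diagonal entries divisible by `K`.
Applied to a finite generating set of `Γ₀(M)`, this leaves only `T` and `L` to be generated, and
with `x * M + y * K = 1` the matrix `T ^ (-x) * L * T ^ (-x)` has diagonal entries `y * K`.
-/

open Matrix MatrixGroups ModularGroup CongruenceSubgroup

theorem Int.exists_isCoprime_add_mul {b d : ℤ} (hbd : IsCoprime b d) {K : ℤ} (hK : K ≠ 0) :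
    ∃ s : ℤ, IsCoprime (b + s * d) K := by
  classical
  set P := K.natAbs.primeFactors.filter fun p : ℕ => ¬ (p : ℤ) ∣ b
  refine ⟨∏ p ∈ P, (p : ℤ), isCoprime_of_prime_dvd (fun h => hK h.2) fun z hz hzx hzK => ?_⟩
  have hz' := Int.prime_iff_natAbs_prime.mp hz
  have hmem : z.natAbs ∈ P ↔ ¬ z ∣ b := by
    simp [P, hz', Int.natAbs_dvd_natAbs.mpr hzK, hK]
  by_cases hzb : z ∣ b
  · rcases hz.dvd_or_dvd ((dvd_add_right hzb).mp hzx) with hs | hd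
    · obtain ⟨p, hp, hzp⟩ := (hz.dvd_finsetProd_iff _).mp hs
      have hpK := (Finset.mem_filter.mp hp).1
      have hzp_eq : z.natAbs = p :=
        (Nat.prime_dvd_prime_iff_eq hz' (Nat.prime_of_mem_primeFactors hpK)).mp
          (Int.natAbs_dvd_natAbs.mpr hzp)
      exact hmem.mp (hzp_eq ▸ hp) hzb
    · exact hz.not_isUnit (hbd.isUnit_of_dvd' hzb hd)
  · have hzs : z ∣ ∏ p ∈ P, (p : ℤ) :=
      (Int.dvd_natAbs.mpr dvd_rfl).trans (Finset.dvd_prod_of_mem _ (hmem.mpr hzb))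
    exact hzb ((dvd_add_left (hzs.mul_right d)).mp hzx)

theorem IsCoprime.exists_dvd_add_mul {b K : ℤ} (h : IsCoprime b K) (a : ℤ) :
    ∃ u : ℤ, K ∣ a + u * b := by
  obtain ⟨x, y, hxy⟩ := h
  exact ⟨-a * x, a * y, by linear_combination (-a) * hxy⟩

namespace ModularGroup

def lowerUnipotent (n : ℤ) : SL(2, ℤ) :=
  ⟨!![1, 0; n, 1], by simp [det_fin_two_of]⟩

lemma coe_lowerUnipotent (n : ℤ) :
    (lowerUnipotent n : Matrix (Fin 2) (Fin 2) ℤ) = !![1, 0; n, 1] :=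
  rfl

lemma lowerUnipotent_eq_conj (n : ℤ) : lowerUnipotent n = S⁻¹ * T ^ (-n) * S := by
  ext i j
  fin_cases i <;> fin_cases j <;> simp [coe_lowerUnipotent, coe_S, coe_T_zpow, adjugate_fin_two]

lemma lowerUnipotent_zpow (n k : ℤ) : lowerUnipotent n ^ k = lowerUnipotent (k * n) := by
  rw [lowerUnipotent_eq_conj, lowerUnipotent_eq_conj, ← inv_inv S, inv_inv S⁻¹, conj_zpow,
    ← _root_.zpow_mul, neg_mul, mul_comm n k]

section Entries

variable (γ : SL(2, ℤ)) (n : ℤ)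

lemma T_zpow_mul_apply_zero_one : (T ^ n * γ) 0 1 = γ 0 1 + n * γ 1 1 := by
  simp [coe_T_zpow, mul_apply, Fin.sum_univ_two]

lemma mul_lowerUnipotent_apply_zero_zero : (γ * lowerUnipotent n) 0 0 = γ 0 0 + n * γ 0 1 := by
  simp [coe_lowerUnipotent, mul_apply, Fin.sum_univ_two, mul_comm]

lemma mul_lowerUnipotent_apply_zero_one : (γ * lowerUnipotent n) 0 1 = γ 0 1 := by
  simp [coe_lowerUnipotent, mul_apply, Fin.sum_univ_two]

lemma lowerUnipotent_mul_apply_zero_zero : (lowerUnipotent n * γ) 0 0 = γ 0 0 := by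
  simp [coe_lowerUnipotent, mul_apply, Fin.sum_univ_two]

lemma lowerUnipotent_mul_apply_one_one : (lowerUnipotent n * γ) 1 1 = γ 1 1 + n * γ 0 1 := by
  simp [coe_lowerUnipotent, mul_apply, Fin.sum_univ_two, add_comm]

end Entries

lemma exists_coe_eq_of_dvd {M K : ℤ} {γ : SL(2, ℤ)} (h₀₀ : K ∣ γ 0 0) (h₁₀ : M ∣ γ 1 0)
    (h₁₁ : K ∣ γ 1 1) :
    ∃ a b c d : ℤ, (γ : Matrix (Fin 2) (Fin 2) ℤ) = !![K * a, b; M * c, K * d] := by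
  obtain ⟨a, ha⟩ := h₀₀
  obtain ⟨c, hc⟩ := h₁₀
  obtain ⟨d, hd⟩ := h₁₁
  refine ⟨a, γ 0 1, c, d, ?_⟩
  ext i j
  fin_cases i <;> fin_cases j <;> simp [ha, hc, hd]

lemma coe_T_zpow_mul_lowerUnipotent_mul_T_zpow (x n : ℤ) :
    ((T ^ (-x) * lowerUnipotent n * T ^ (-x) : SL(2, ℤ)) : Matrix (Fin 2) (Fin 2) ℤ) =
      !![1 - x * n, x * (x * n - 2); n, 1 - x * n] := by
  ext i j
  fin_cases i <;> fin_cases j <;>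
    simp [coe_T_zpow, coe_lowerUnipotent, mul_apply, Fin.sum_univ_two] <;> ring

lemma exists_mul_mul_dvd_diag {M K : ℤ} (hMK : IsCoprime M K) (hK : K ≠ 0)
    {N : Subgroup SL(2, ℤ)} (hT : T ∈ N) (hL : lowerUnipotent M ∈ N) (γ : SL(2, ℤ)) :
    ∃ n₁ ∈ N, ∃ n₂ ∈ N, K ∣ (n₁ * γ * n₂) 0 0 ∧ K ∣ (n₁ * γ * n₂) 1 1 := by
  obtain ⟨s, hs⟩ := Int.exists_isCoprime_add_mul (γ.isCoprime_col 1) hK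
  rw [← T_zpow_mul_apply_zero_one] at hs
  obtain ⟨u, hu⟩ := (hMK.mul_left hs).exists_dvd_add_mul ((T ^ s * γ) 0 0)
  obtain ⟨v, hv⟩ := (hMK.mul_left hs).exists_dvd_add_mul
    ((T ^ s * γ * lowerUnipotent (u * M)) 1 1)
  have hLN (k : ℤ) : lowerUnipotent (k * M) ∈ N := lowerUnipotent_zpow M k ▸ zpow_mem hL k
  refine ⟨lowerUnipotent (v * M) * T ^ s, mul_mem (hLN v) (zpow_mem hT s),
    lowerUnipotent (u * M), hLN u, ?_⟩
  simp only [mul_assoc, lowerUnipotent_mul_apply_zero_zero, lowerUnipotent_mul_apply_one_one]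
  simp only [← mul_assoc, mul_lowerUnipotent_apply_zero_zero, mul_lowerUnipotent_apply_zero_one]
  constructor
  · convert hu using 1; ring
  · convert hv using 1; ring

end ModularGroup

theorem Subgroup.FG.exists_finset_sup_closure_eq {G : Type*} [Group G] {H N : Subgroup G}
    (hH : H.FG) (hN : N ≤ H) {P : G → Prop} (h : ∀ g ∈ H, ∃ n₁ ∈ N, ∃ n₂ ∈ N, P (n₁ * g * n₂)) :
    ∃ S : Finset G, (∀ δ ∈ S, P δ) ∧ H = N ⊔ closure S := by
  classical
  obtain ⟨S₀, rfl⟩ := hH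
  choose! n₁ hn₁ n₂ hn₂ hP using h
  set δ : G → G := fun g => n₁ g * g * n₂ g
  have hS₀ {g : G} (hg : g ∈ S₀) : g ∈ closure (S₀ : Set G) := subset_closure hg
  refine ⟨S₀.image δ, by simpa using fun g hg => hP g (hS₀ hg), le_antisymm ?_ ?_⟩
  · refine (closure_le _).mpr fun g hg => ?_
    have hδ : δ g ∈ N ⊔ closure ↑(S₀.image δ) :=
      mem_sup_right (subset_closure (Finset.mem_image_of_mem δ hg))
    rw [show g = (n₁ g)⁻¹ * δ g * (n₂ g)⁻¹ by simp [δ, mul_assoc]]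
    exact mul_mem (mul_mem (inv_mem (mem_sup_left (hn₁ g (hS₀ hg)))) hδ)
      (inv_mem (mem_sup_left (hn₂ g (hS₀ hg))))
  · refine sup_le hN ((closure_le _).mpr ?_)
    simp only [Finset.coe_image, Set.image_subset_iff]
    exact fun g hg => mul_mem (mul_mem (hN (hn₁ g (hS₀ hg))) (hS₀ hg)) (hN (hn₂ g (hS₀ hg)))

instance : Group.FG SL(2, ℤ) :=
  Group.fg_iff.mpr ⟨{S, T}, SpecialLinearGroup.SL2Z_generators, Set.toFinite _⟩

namespace CongruenceSubgroup

lemma dvd_of_mem_Gamma0 {M : ℕ} {γ : SL(2, ℤ)} (hγ : γ ∈ Gamma0 M) : (M : ℤ) ∣ γ 1 0 :=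
  (ZMod.intCast_zmod_eq_zero_iff_dvd _ M).mp (Gamma0_mem.mp hγ)

lemma T_mem_Gamma0 (M : ℕ) : T ∈ Gamma0 M := by
  simp [Gamma0_mem, coe_T]

lemma lowerUnipotent_mem_Gamma0 (M : ℕ) : lowerUnipotent M ∈ Gamma0 M := by
  simp [Gamma0_mem, coe_lowerUnipotent]

end CongruenceSubgroup

/-- For coprime positive integers `M, K` with `K > 1`, the group `Γ₀(M)` is generated
by `T = [[1,1],[0,1]]` together with finitely many matrices of the form
`[[K·a, b], [M·c, K·d]]`. -/
theorem Gamma0_generated_by_T_and_special (M K : ℕ) (hM : 0 < M) (hK : 1 < K)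
    (hcop : Nat.Coprime M K) :
    ∃ (T : Matrix.SpecialLinearGroup (Fin 2) ℤ)
      (S : Finset (Matrix.SpecialLinearGroup (Fin 2) ℤ)),
      (T : Matrix (Fin 2) (Fin 2) ℤ) = !![1, 1; 0, 1] ∧
      (∀ γ ∈ S, ∃ a b c d : ℤ,
        (γ : Matrix (Fin 2) (Fin 2) ℤ) = !![(K : ℤ) * a, b; (M : ℤ) * c, (K : ℤ) * d]) ∧
      CongruenceSubgroup.Gamma0 M
        = Subgroup.closure (insert T (S : Set (Matrix.SpecialLinearGroup (Fin 2) ℤ))) := by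
  have : NeZero M := ⟨hM.ne'⟩
  have hfg : (Gamma0 M).FG := (Group.fg_iff_subgroup_fg _).mp inferInstance
  obtain ⟨x, y, hxy⟩ := hcop.isCoprime
  set δL := T ^ (-x) * lowerUnipotent M * T ^ (-x)
  set N := Subgroup.closure {T, δL}
  have hTΓ := T_mem_Gamma0 M
  have hNΓ : N ≤ Gamma0 M := (Subgroup.closure_le _).mpr <| Set.insert_subset hTΓ <|
    Set.singleton_subset_iff.mpr <|
      mul_mem (mul_mem (zpow_mem hTΓ _) (lowerUnipotent_mem_Gamma0 M)) (zpow_mem hTΓ _)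
  have hTN : T ∈ N := Subgroup.subset_closure (by simp)
  have hLN : lowerUnipotent M ∈ N := by
    rw [show lowerUnipotent M = T ^ x * δL * T ^ x by simp only [δL]; group]
    exact mul_mem (mul_mem (zpow_mem hTN x) (Subgroup.subset_closure (by simp))) (zpow_mem hTN x)
  obtain ⟨S, hSdvd, hS⟩ := hfg.exists_finset_sup_closure_eq hNΓ
    (P := fun δ => (K : ℤ) ∣ δ 0 0 ∧ (K : ℤ) ∣ δ 1 1)
    fun γ _ => exists_mul_mul_dvd_diag hcop.isCoprime (by positivity) hTN hLN γ
  refine ⟨T, insert δL S, coe_T, ?_, ?_⟩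
  · simp only [Finset.mem_insert, forall_eq_or_imp]
    refine ⟨⟨y, x * (x * M - 2), 1, y, ?_⟩, fun δ hδ => ?_⟩
    · rw [coe_T_zpow_mul_lowerUnipotent_mul_T_zpow, mul_one,
        show 1 - x * M = K * y by linear_combination -hxy]
    · have hδΓ : δ ∈ Gamma0 M := hS ▸ Subgroup.mem_sup_right (Subgroup.subset_closure hδ)
      exact exists_coe_eq_of_dvd (hSdvd δ hδ).1 (dvd_of_mem_Gamma0 hδΓ) (hSdvd δ hδ).2
  · rw [hS, Finset.coe_insert, ← Subgroup.closure_union]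
    simp [Set.insert_union]
end

section
/- Let X be a smooth projective curve of genus g over an algebraically closed field, let k be a positive integer, and let ω be a global section of Ω^{⊗k} (the k-th tensor power of the sheaf of regular differentials). Fix a point x ∈ X with uniformiser q, and write ω = (a₁ + a₂q + a₃q² + ...)(dq)^{⊗k} in the completed local ring at x. If a_i = 0 for all i ∈ {1, ..., k(2g−2)+1}, then ω = 0. -/
/-- The divisor theory of a smooth projective curve of genus `g` over an algebraically
closed field: points all have degree one, the degree map on divisors is additive and
nonnegative on effective divisors, principal divisors have degree zero, and there is a
canonical divisor of degree `2g − 2` (the divisor class of `dq` for a uniformiser `q`,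
so that the global sections of `Ω^{⊗k}` are exactly the `f·(dq)^{⊗k}` with
`div(f) + k·canonical ≥ 0`). -/
structure SmoothProjCurve where
  /-- The (closed) points of the curve. -/
  Point : Type
  /-- The function field of the curve. -/
  FnField : Type
  /-- The function field is a field. -/
  fieldInst : Field FnField
  /-- The genus of the curve. -/
  genus : ℕ
  /-- The degree of a divisor. -/
  deg : (Point →₀ ℤ) → ℤ
  deg_add : ∀ D E : Point →₀ ℤ, deg (D + E) = deg D + deg E
  deg_nonneg_of_effective : ∀ D : Point →₀ ℤ, 0 ≤ D → 0 ≤ deg D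
  /-- Over an algebraically closed field every closed point has degree one. -/
  deg_single : ∀ x : Point, deg (Finsupp.single x 1) = 1
  /-- The divisor of a nonzero rational function. -/
  divOf : ∀ f : FnField, f ≠ fieldInst.zero → (Point →₀ ℤ)
  /-- Principal divisors have degree zero. -/
  deg_divOf : ∀ (f : FnField) (hf : f ≠ fieldInst.zero), deg (divOf f hf) = 0
  /-- A canonical divisor. -/
  canonical : Point →₀ ℤ
  /-- The canonical divisor has degree `2·genus − 2`. -/
  deg_canonical : deg canonical = 2 * (genus : ℤ) - 2

lemma SmoothProjCurve.deg_zero (C : SmoothProjCurve) : C.deg 0 = 0 := by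
  have h := C.deg_add 0 0
  simp at h
  linarith

lemma SmoothProjCurve.deg_nsmul (C : SmoothProjCurve) (n : ℕ) (E : C.Point →₀ ℤ) :
    C.deg ((n : ℤ) • E) = n * C.deg E := by
  induction n with
  | zero => simp [C.deg_zero]
  | succ n ih =>
      have : ((n + 1 : ℕ) : ℤ) • E = (n : ℤ) • E + E := by
        push_cast
        rw [add_smul, one_smul]
      rw [this, C.deg_add, ih]
      push_cast
      ring

/-- Sturm bound (Lemma 36): let `ω = f·(dq)^{⊗k}` be a global section of `Ω^{⊗k}` on a
smooth projective curve of genus `g` over an algebraically closed field (so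
`div(f) + k·K ≥ 0` for a canonical divisor `K`).  If the expansion of `ω` at a point
`x` in a uniformiser `q` has its coefficients `a₁, …, a_{k(2g−2)+1}` all zero — that
is, `ω` vanishes at `x` to order at least `k(2g−2)+1`, i.e.
`(div(f) + k·K)(x) ≥ k(2g−2)+1` — then `ω = 0`; equivalently, no nonzero `f` can
satisfy these conditions. -/
theorem sturm_bound_for_differentials (C : SmoothProjCurve) (k : ℕ) (hk : 0 < k)
    (f : C.FnField) (hf : f ≠ C.fieldInst.zero)
    (hglobal : (0 : C.Point →₀ ℤ) ≤ C.divOf f hf + (k : ℤ) • C.canonical)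
    (x : C.Point)
    (hvanish : (k : ℤ) * (2 * (C.genus : ℤ) - 2) + 1
        ≤ (C.divOf f hf + (k : ℤ) • C.canonical) x) :
    False := by
  classical
  set D := C.divOf f hf + (k : ℤ) • C.canonical with hD
  have hdegD : C.deg D = (k : ℤ) * (2 * (C.genus : ℤ) - 2) := by
    rw [hD, C.deg_add, C.deg_divOf, C.deg_nsmul, C.deg_canonical]
    ring
  by_cases hpos : 0 < (k : ℤ) * (2 * (C.genus : ℤ) - 2) + 1
  · -- let m = k(2g-2)+1 > 0, E = D - m • single x 1 is effective of degree -1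
    set m : ℕ := ((k : ℤ) * (2 * (C.genus : ℤ) - 2) + 1).toNat with hm
    have hmz : (m : ℤ) = (k : ℤ) * (2 * (C.genus : ℤ) - 2) + 1 := Int.toNat_of_nonneg hpos.le
    set E : C.Point →₀ ℤ := D - (m : ℤ) • Finsupp.single x 1 with hE
    have hEeff : (0 : C.Point →₀ ℤ) ≤ E := by
      intro y
      by_cases hy : y = x
      · subst hy
        simp [hE, hmz]
        have := hvanish
        simp [hD] at this ⊢
        linarith
      · have h1 := hglobal y
        simp [hE, Finsupp.single_apply, Ne.symm hy] at h1 ⊢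
        simpa [hD] using h1
    have hdegE : C.deg E = -1 := by
      have hsplit : D = E + (m : ℤ) • Finsupp.single x 1 := by
        rw [hE]; abel
      have := C.deg_add E ((m : ℤ) • Finsupp.single x 1)
      rw [← hsplit, hdegD, C.deg_nsmul, C.deg_single] at this
      have := this
      linarith [this, hmz]
    have := C.deg_nonneg_of_effective E hEeff
    omega
  · -- degree of D is negative, contradicting effectiveness
    have := C.deg_nonneg_of_effective D hglobal
    omega
end

section
/- Let Γ_G, Γ_H ⊂ SL₂(ℤ) be congruence subgroups of level N (each containing Γ(N)), and let γ ∈ M₂(ℤ) with det(γ) = δ > 0. Suppose that for every s ∈ Γ_G there exists s′ ∈ Γ_H with s′·γ ≡ γ·s (mod N·δ). Then γ·Γ_G·γ⁻¹ ⊆ Γ_H. -/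
/-!
Write `s′γ - γs = (Nδ)•M`. Multiplying `γs = s′γ - (Nδ)•M` on the right by `adj γ = δγ⁻¹`
shows that the conjugate `γsγ⁻¹` is the integer matrix `T = s′ - N•(M adj γ)`. It has
determinant `det s = 1` and is congruent to `s′` modulo `N`, so `s′⁻¹T ∈ Γ(N) ≤ Γ_H`.
-/

open Matrix CongruenceSubgroup
open scoped MatrixGroups

theorem Matrix.exists_eq_smul_of_forall_dvd {m n R : Type*} [Semigroup R] {c : R}
    {A : Matrix m n R} (h : ∀ i j, c ∣ A i j) : ∃ M : Matrix m n R, A = c • M :=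
  ⟨Matrix.of fun i j => (h i j).choose, by ext i j; exact (h i j).choose_spec⟩

section Adjugate

variable {n R : Type*} [Fintype n] [DecidableEq n] [CommRing R]

theorem Matrix.mul_mul_adjugate_eq_smul {γ s s' M : Matrix n n R} {c : R}
    (h : s' * γ - γ * s = (c * γ.det) • M) :
    γ * s * γ.adjugate = γ.det • (s' - c • (M * γ.adjugate)) := by
  have hγs : γ * s = s' * γ - (c * γ.det) • M := by rw [← h]; abel
  rw [hγs, sub_mul, smul_mul, Matrix.mul_assoc, mul_adjugate, Matrix.mul_smul, Matrix.mul_one,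
    smul_sub, smul_smul, mul_comm c]

theorem Matrix.det_eq_of_mul_mul_adjugate_eq_smul [IsDomain R] {γ s T : Matrix n n R}
    (hγ : γ.det ≠ 0) (h : γ * s * γ.adjugate = γ.det • T) : T.det = s.det := by
  have key : γ.det ^ Fintype.card n * T.det = γ.det ^ Fintype.card n * s.det := by
    rw [← det_smul, ← h, det_mul, det_mul, mul_right_comm, ← det_mul, mul_adjugate, det_smul,
      det_one, mul_one, mul_comm]
  exact mul_left_cancel₀ (pow_ne_zero _ hγ) key

theorem Matrix.map_mul_mul_inv_eq_map {K : Type*} [Field K] (f : R →+* K) {γ A T : Matrix n n R}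
    (hγ : f γ.det ≠ 0) (h : γ * A * γ.adjugate = γ.det • T) :
    γ.map f * A.map f * (γ.map f)⁻¹ = T.map f := by
  have hdet : (γ.map f).det = f γ.det := (f.map_det γ).symm
  have hadj : (γ.map f).adjugate = γ.adjugate.map f := (f.map_adjugate γ).symm
  have hconj : γ.map f * A.map f * (γ.map f).adjugate = f γ.det • T.map f := by
    rw [hadj, ← f.mapMatrix_apply, ← f.mapMatrix_apply, ← f.mapMatrix_apply, ← map_mul,
      ← map_mul, h, f.mapMatrix_apply]
    ext i j
    simp
  rw [inv_def, hdet, Ring.inverse_eq_inv, Matrix.mul_smul, hconj, smul_smul,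
    inv_mul_cancel₀ hγ, one_smul]

end Adjugate

theorem CongruenceSubgroup.mem_of_Gamma_le_of_cast_eq {N : ℕ} {Γ : Subgroup SL(2, ℤ)}
    (hΓ : Gamma N ≤ Γ) {s t : SL(2, ℤ)} (hs : s ∈ Γ)
    (hst : ∀ i j, (t i j : ZMod N) = s i j) : t ∈ Γ := by
  have h : s⁻¹ * t ∈ Gamma N := by
    rw [Gamma_mem', map_mul, map_inv, inv_mul_eq_one]
    ext i j
    exact (hst i j).symm
  simpa using Γ.mul_mem hs (hΓ h)

theorem conj_subgroup_le_of_congruence_general (N : ℕ)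
    (ΓG ΓH : Subgroup (Matrix.SpecialLinearGroup (Fin 2) ℤ))
    (hH : CongruenceSubgroup.Gamma N ≤ ΓH)
    (γ : Matrix (Fin 2) (Fin 2) ℤ) (δ : ℤ) (hδ : 0 < δ) (hγ : γ.det = δ)
    (hcong : ∀ s ∈ ΓG, ∃ s' ∈ ΓH, ∀ i j,
      ((N : ℤ) * δ) ∣ (((s' : Matrix (Fin 2) (Fin 2) ℤ)) * γ
        - γ * ((s : Matrix (Fin 2) (Fin 2) ℤ))) i j) :
    ∀ s ∈ ΓG, ∃ t ∈ ΓH,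
      γ.map (Int.cast : ℤ → ℚ) * ((s : Matrix (Fin 2) (Fin 2) ℤ)).map (Int.cast : ℤ → ℚ) *
          (γ.map (Int.cast : ℤ → ℚ))⁻¹
        = ((t : Matrix (Fin 2) (Fin 2) ℤ)).map (Int.cast : ℤ → ℚ) := by
  intro s hs
  obtain ⟨s', hs', hdvd⟩ := hcong s hs
  obtain ⟨M, hM⟩ := Matrix.exists_eq_smul_of_forall_dvd hdvd
  set T := (s' : Matrix (Fin 2) (Fin 2) ℤ) - (N : ℤ) • (M * γ.adjugate)
  have hγ₀ : γ.det ≠ 0 := hγ ▸ hδ.ne'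
  have hconj : γ * s * γ.adjugate = γ.det • T := mul_mul_adjugate_eq_smul (by rw [hM, hγ])
  have hT : T.det = 1 := (det_eq_of_mul_mul_adjugate_eq_smul hγ₀ hconj).trans s.2
  refine ⟨⟨T, hT⟩, mem_of_Gamma_le_of_cast_eq hH hs' ?_,
    map_mul_mul_inv_eq_map (Int.castRingHom ℚ) (by simpa using hγ₀) hconj⟩
  intro i j
  simp only [T, Matrix.sub_apply, Matrix.smul_apply, smul_eq_mul, Int.cast_sub, Int.cast_mul,
    Int.cast_natCast, ZMod.natCast_self, zero_mul, sub_zero]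

/-- Part of Proposition 7: let `Γ_G, Γ_H ⊆ SL₂(ℤ)` be congruence subgroups of level `N`
(both containing `Γ(N)`), and let `γ` be an integer matrix with `det(γ) = δ > 0`.
If for every `s ∈ Γ_G` there is `s′ ∈ Γ_H` with `s′·γ ≡ γ·s (mod Nδ)`, then
`γ·Γ_G·γ⁻¹ ⊆ Γ_H` (conjugation computed in `GL₂(ℚ)`). -/
theorem conj_subgroup_le_of_congruence (N : ℕ) (hN : 0 < N)
    (ΓG ΓH : Subgroup (Matrix.SpecialLinearGroup (Fin 2) ℤ))
    (hG : CongruenceSubgroup.Gamma N ≤ ΓG) (hH : CongruenceSubgroup.Gamma N ≤ ΓH)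
    (γ : Matrix (Fin 2) (Fin 2) ℤ) (δ : ℤ) (hδ : 0 < δ) (hγ : γ.det = δ)
    (hcong : ∀ s ∈ ΓG, ∃ s' ∈ ΓH, ∀ i j,
      ((N : ℤ) * δ) ∣ (((s' : Matrix (Fin 2) (Fin 2) ℤ)) * γ
        - γ * ((s : Matrix (Fin 2) (Fin 2) ℤ))) i j) :
    ∀ s ∈ ΓG, ∃ t ∈ ΓH,
      γ.map (Int.cast : ℤ → ℚ) * ((s : Matrix (Fin 2) (Fin 2) ℤ)).map (Int.cast : ℤ → ℚ) *
          (γ.map (Int.cast : ℤ → ℚ))⁻¹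
        = ((t : Matrix (Fin 2) (Fin 2) ℤ)).map (Int.cast : ℤ → ℚ) :=
  conj_subgroup_le_of_congruence_general N ΓG ΓH hH γ δ hδ hγ hcong
end
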